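/- For a symmetric positive semidefinite A ∈ ℝ^{n×n}, the iterative peeling decomposition yields vectors x_1,...,x_n ∈ ℝ^n with ∑_{k=1}^n x_k x_k^T = A and ∑_{k=1}^n ‖x_k‖_1² ≤ n · tr(A). In particular γ_+(A) ≤ n · tr(A). -/

import Mathlib

/-! Writing `A = Bᵀ B` with `B` the positive square root of `A`, the rows `x_k` of `B` satisfy
`∑ x_k x_kᵀ = A` and `∑ ‖x_k‖₂² = tr A`, while Cauchy–Schwarz gives `‖x‖₁² ≤ n ‖x‖₂²`. -/

open Finset Matrix

theorem sq_sum_abs_le_card_mul_sum_sq {ι α : Type*} [Fintype ι] [Ring α] [LinearOrder α]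
    [IsStrictOrderedRing α] (v : ι → α) :
    (∑ j, |v j|) ^ 2 ≤ Fintype.card ι * ∑ j, v j ^ 2 := by
  simpa only [sq_abs, card_univ] using sq_sum_le_card_mul_sum_sq (s := univ) (f := fun j => |v j|)

namespace Matrix

variable {ι n : Type*} [Fintype ι]

theorem sum_vecMulVec_self_eq_transpose_mul {R : Type*} [NonUnitalNonAssocSemiring R]
    (B : Matrix ι n R) : ∑ k, vecMulVec (B k) (B k) = Bᵀ * B := by
  ext i j
  simp only [sum_apply, vecMulVec_apply, mul_apply, transpose_apply]

theorem trace_transpose_mul_self {R : Type*} [Fintype n] [CommSemiring R] (B : Matrix ι n R) :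
    (Bᵀ * B).trace = ∑ k, ∑ j, B k j ^ 2 := by
  simp only [trace, diag_apply, mul_apply, transpose_apply, sq]
  exact sum_comm

theorem sum_sq_sum_abs_le_card_mul_trace {R : Type*} [Fintype n] [CommRing R] [LinearOrder R]
    [IsStrictOrderedRing R] (B : Matrix ι n R) :
    ∑ k, (∑ j, |B k j|) ^ 2 ≤ Fintype.card n * (Bᵀ * B).trace := by
  rw [trace_transpose_mul_self, mul_sum]
  exact sum_le_sum fun k _ => sq_sum_abs_le_card_mul_sum_sq (B k)

open scoped ComplexOrder in
theorem PosSemidef.exists_conjTranspose_mul_self_eq {𝕜 : Type*} [RCLike 𝕜] [Fintype n]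
    [DecidableEq n] {A : Matrix n n 𝕜} (hA : A.PosSemidef) : ∃ B : Matrix n n 𝕜, Bᴴ * B = A := by
  open scoped MatrixOrder in
  exact ⟨CFC.sqrt A, by
    rw [(CFC.sqrt_nonneg A).posSemidef.isHermitian.eq, CFC.sqrt_mul_sqrt_self A hA.nonneg]⟩

end Matrix

open Finset Matrix in
theorem stmt18 (n : ℕ) (A : Matrix (Fin n) (Fin n) ℝ) (hA : A.PosSemidef) :
    (∃ x : Fin n → Fin n → ℝ,
      (∑ k, Matrix.vecMulVec (x k) (x k)) = A ∧
      (∑ k, (∑ j, |x k j|) ^ 2) ≤ (n : ℝ) * A.trace) ∧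
    sInf {s : ℝ | ∃ (p : ℕ) (x : Fin p → Fin n → ℝ),
        (∑ k, Matrix.vecMulVec (x k) (x k)) = A ∧
        s = ∑ k, (∑ j, |x k j|) ^ 2}
      ≤ (n : ℝ) * A.trace := by
  obtain ⟨B, hB⟩ := hA.exists_conjTranspose_mul_self_eq
  rw [conjTranspose_eq_transpose_of_trivial] at hB
  have hdecomp : ∑ k, vecMulVec (B k) (B k) = A := by
    rw [sum_vecMulVec_self_eq_transpose_mul, hB]
  have hbound : ∑ k, (∑ j, |B k j|) ^ 2 ≤ (n : ℝ) * A.trace := by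
    simpa only [hB, Fintype.card_fin] using sum_sq_sum_abs_le_card_mul_trace B
  refine ⟨⟨B, hdecomp, hbound⟩, le_trans (csInf_le ⟨0, ?_⟩ ⟨n, B, hdecomp, rfl⟩) hbound⟩
  rintro _ ⟨p, y, -, rfl⟩
  positivity
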